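/- Fix v ∈ {±1}^d, an integer threshold t, and T ⊆ {1,…,d}. Then the Fourier coefficient of f_v at T satisfies E[f_v(x)·χ_T(x)] = χ_T(v)·(−1)^{|T|}·2^{−d}·Σ_{s=t}^{d} C(d,s)·K(d, s, |T|), where χ_T(x) := Π_{i ∈ T} xᵢ. -/

import Mathlib

/-- The ±1 value of a hypercube coordinate encoded by a boolean. -/
def sgnB (b : Bool) : ℤ := if b then 1 else -1

/-- Inner product `v·x` of two vertices of the hypercube `{±1}^d`. -/
def dotB {d : ℕ} (v x : Fin d → Bool) : ℤ := ∑ i, sgnB (v i) * sgnB (x i)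

/-- `f_v(x) = 1{v·x ≥ 2t − d}`, real valued. -/
noncomputable def fv {d : ℕ} (t : ℕ) (v x : Fin d → Bool) : ℝ :=
  if 2 * (t : ℤ) - d ≤ dotB v x then 1 else 0

/-- The normalized Kravchuk polynomial
`K(n, a, b) = (1/(C(n,a)·C(n,b))) · Σ_{A,B ⊆ [n], |A|=a, |B|=b} (−1)^{|A ∩ B|}`. -/
noncomputable def krav (n a b : ℕ) : ℝ :=
  (∑ A ∈ Finset.powersetCard a (Finset.univ : Finset (Fin n)),
      ∑ B ∈ Finset.powersetCard b (Finset.univ : Finset (Fin n)),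
        (-1 : ℝ) ^ (A ∩ B).card) /
    ((n.choose a) * (n.choose b))

/-!
Reindex the cube by the agreement set `A = {i | xᵢ = vᵢ}`. Then `v·x = 2|A| − d`, so
`f_v(x) = 1{t ≤ |A|}`, and `χ_T(x) = χ_T(v)·(−1)^{|T \ A|} = χ_T(v)·(−1)^{|T|}·(−1)^{|A ∩ T|}`.
Grouping the sets `A` by size `s`, it remains to see
`Σ_{|A| = s} (−1)^{|A ∩ T|} = C(d,s)·K(d,s,|T|)`: the left side is invariant under permuting
coordinates, so it depends on `T` only through `|T|`, and averaging it over all `B` with `|B| = |T|`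
gives the definition of `K`.
-/

open Finset

section

variable {α : Type*} [Fintype α]

theorem exists_perm_map_eq_of_card_eq [DecidableEq α] {B B' : Finset α} (h : #B = #B') :
    ∃ σ : Equiv.Perm α, B.map σ.toEmbedding = B' := by
  refine ⟨(equivOfCardEq h).extendSubtype, eq_of_subset_of_card_le ?_ (by simp [h])⟩
  intro y hy
  obtain ⟨x, hx, rfl⟩ := mem_map.1 hy
  exact (equivOfCardEq h).extendSubtype_mem x hx

theorem sum_powersetCard_inter_card_congr [DecidableEq α] {M : Type*} [AddCommMonoid M]
    (g : ℕ → M) (s : ℕ) {B B' : Finset α} (h : #B = #B') :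
    ∑ A ∈ powersetCard s univ, g #(A ∩ B) = ∑ A ∈ powersetCard s univ, g #(A ∩ B') := by
  obtain ⟨σ, rfl⟩ := exists_perm_map_eq_of_card_eq h
  conv_rhs => rw [← map_univ_equiv σ, powersetCard_map, sum_map]
  simp only [RelEmbedding.coe_toEmbedding, mapEmbedding_apply, ← map_inter, card_map]

theorem sum_filter_le_card_eq_sum_Icc {M : Type*} [AddCommMonoid M] (g : Finset α → M) (t : ℕ) :
    ∑ S with t ≤ #S, g S = ∑ s ∈ Icc t (Fintype.card α), ∑ S ∈ powersetCard s univ, g S := by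
  rw [← sum_fiberwise_of_maps_to (g := card) (t := Icc t (Fintype.card α))]
  · refine sum_congr rfl fun s hs => sum_congr ?_ fun _ _ => rfl
    ext S
    simp only [mem_filter, mem_univ, true_and, mem_powersetCard_univ]
    exact ⟨And.right, fun h => ⟨h ▸ (mem_Icc.1 hs).1, h⟩⟩
  · intro S hS
    exact mem_Icc.2 ⟨(mem_filter.1 hS).2, card_le_univ S⟩

def agreeEquiv [DecidableEq α] (v : α → Bool) : (α → Bool) ≃ Finset α where
  toFun x := {i | x i = v i}
  invFun S i := if i ∈ S then v i else !v i
  left_inv x := by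
    funext i
    cases hx : x i <;> cases v i <;> simp [hx]
  right_inv S := by
    ext i
    by_cases hi : i ∈ S <;> simp [hi]

end

theorem choose_mul_krav {d : ℕ} (s : ℕ) (T : Finset (Fin d)) :
    (d.choose s : ℝ) * krav d s #T =
      ∑ A ∈ powersetCard s (univ : Finset (Fin d)), (-1 : ℝ) ^ #(A ∩ T) := by
  have hnum : ∑ A ∈ powersetCard s (univ : Finset (Fin d)), ∑ B ∈ powersetCard #T univ,
      (-1 : ℝ) ^ #(A ∩ B) = d.choose #T * ∑ A ∈ powersetCard s univ, (-1 : ℝ) ^ #(A ∩ T) := by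
    rw [sum_comm, sum_congr rfl fun B hB =>
      sum_powersetCard_inter_card_congr (fun k => (-1 : ℝ) ^ k) s (mem_powersetCard_univ.1 hB),
      sum_const, card_powersetCard, card_univ, Fintype.card_fin, nsmul_eq_mul]
  rcases le_or_gt s d with hs | hs
  · have hs' : (d.choose s : ℝ) ≠ 0 := by exact_mod_cast (Nat.choose_pos hs).ne'
    have hT : (d.choose #T : ℝ) ≠ 0 := by
      exact_mod_cast (Nat.choose_pos (by simpa using card_le_univ T)).ne'
    rw [krav, hnum]
    field_simp
  · have hempty : powersetCard s (univ : Finset (Fin d)) = ∅ :=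
      powersetCard_eq_empty.2 (by simpa using hs)
    simp [Nat.choose_eq_zero_of_lt hs, hempty]

section

variable {d : ℕ} (v x : Fin d → Bool)

theorem dotB_eq_two_mul_card_agree : dotB v x = 2 * #(agreeEquiv v x) - d := by
  have hterm : ∀ i, sgnB (v i) * sgnB (x i) = 2 * (if x i = v i then 1 else 0) - 1 := by
    intro i; cases v i <;> cases x i <;> rfl
  simp only [dotB, hterm, sum_sub_distrib, ← mul_sum, sum_boole, sum_const, card_univ,
    Fintype.card_fin, agreeEquiv, Equiv.coe_fn_mk, nsmul_eq_mul, mul_one]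

theorem fv_eq_ite_le_card_agree (t : ℕ) : fv t v x = if t ≤ #(agreeEquiv v x) then 1 else 0 := by
  rw [fv, dotB_eq_two_mul_card_agree]
  congr 1
  apply propext
  omega

theorem prod_sgnB_eq (T : Finset (Fin d)) :
    ∏ i ∈ T, (sgnB (x i) : ℝ) =
      (∏ i ∈ T, (sgnB (v i) : ℝ)) * (-1) ^ #T * (-1) ^ #(agreeEquiv v x ∩ T) := by
  have hterm : ∀ i, (sgnB (x i) : ℝ) =
      sgnB (v i) * -1 * (if i ∈ agreeEquiv v x then -1 else 1) := by
    intro i; cases hv : v i <;> cases hx : x i <;> simp [sgnB, agreeEquiv, hv, hx]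
  rw [prod_congr rfl fun i _ => hterm i, prod_mul_distrib, prod_mul_distrib, prod_const,
    prod_ite_mem, prod_const, inter_comm]

end

theorem stmt_14 {d : ℕ} (t : ℕ) (v : Fin d → Bool) (T : Finset (Fin d)) :
    (∑ x, fv t v x * ∏ i ∈ T, (sgnB (x i) : ℝ)) / 2 ^ d =
      (∏ i ∈ T, (sgnB (v i) : ℝ)) * (-1) ^ T.card * (1 / 2 ^ d) *
        ∑ s ∈ Finset.Icc t d, (d.choose s : ℝ) * krav d s T.card := by
  set c := (∏ i ∈ T, (sgnB (v i) : ℝ)) * (-1) ^ #T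
  have hsum : ∑ x, fv t v x * ∏ i ∈ T, (sgnB (x i) : ℝ) =
      ∑ S with t ≤ #S, c * (-1) ^ #(S ∩ T) := by
    rw [sum_filter]
    refine Fintype.sum_equiv (agreeEquiv v) _ _ fun x => ?_
    rw [fv_eq_ite_le_card_agree, prod_sgnB_eq v x]
    split_ifs <;> ring
  rw [hsum, ← mul_sum, sum_filter_le_card_eq_sum_Icc, Fintype.card_fin]
  simp_rw [choose_mul_krav]
  ring
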